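/- Let N = 2M+1. If a ∈ ℝ^N is a nonzero odd vector, then the signal lengths satisfy L(a) + L(Fa) ≥ N + 3, where F is the centered DFT. -/

import Mathlib

open scoped Real BigOperators

/-- The index set `I_N = {-M+1, ..., -M+N}` with `M = ⌊(N+1)/2⌋`. -/
noncomputable def Iset (N : ℕ) : Finset ℤ :=
  Finset.Icc (1 - (((N + 1) / 2 : ℕ) : ℤ)) ((N : ℤ) - (((N + 1) / 2 : ℕ) : ℤ))

/-- The centered discrete Fourier transform. -/
noncomputable def dft (N : ℕ) (u : ℤ → ℂ) (l : ℤ) : ℂ :=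
  (Real.sqrt N : ℂ)⁻¹ *
    ∑ k ∈ Iset N, Complex.exp (-2 * Real.pi * Complex.I * k * l / N) * u k

open Classical in
/-- The support of a vector: indices in `I_N` where it is nonzero. -/
noncomputable def supp (N : ℕ) (u : ℤ → ℂ) : Finset ℤ :=
  (Iset N).filter (fun k => u k ≠ 0)

/-- The signal length `L(b) = max{i - j : i, j ∈ supp b} + 1`. -/
noncomputable def len (N : ℕ) (u : ℤ → ℂ) : ℕ :=
  ((supp N u ×ˢ supp N u).sup fun p => (p.1 - p.2).toNat) + 1

/-- A vector is odd if `a(-k) = -a(k)` for all `k ∈ I_N` (here `N` odd, `I_N = {-M,…,M}`). -/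
def IsOddVec (N : ℕ) (a : ℤ → ℝ) : Prop := ∀ k ∈ Iset N, a (-k) = - a k

/-! If the odd vector `a` has support in `[-m, m]`, with `m` maximal, then `L(a) = 2m + 1`, and
`Fa(l)` is `ζ^(-m l)` times a nonzero polynomial of degree `≤ 2m` evaluated at `ζ^l`, where `ζ` is
a primitive `N`-th root of unity. The points `ζ^l`, `l ∈ I_N`, are distinct, so `Fa` has at most
`2m` zeros on `I_N` and `|supp Fa| ≥ N - 2m`. On the other hand `Fa` is odd too, so with
`L(Fa) = 2m' + 1` its support lies in `[-m', m'] \ {0}` and `|supp Fa| ≤ 2m'`. Thus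
`2m + 2m' ≥ N`, and since `N` is odd, `2m + 2m' ≥ N + 1`, i.e. `L(a) + L(Fa) ≥ N + 3`. -/

open Finset

lemma pos_of_mem_Iset {N : ℕ} {k : ℤ} (hk : k ∈ Iset N) : 0 < N := by
  simp only [Iset, mem_Icc] at hk
  omega

lemma card_Iset (N : ℕ) : #(Iset N) = N := by
  rw [Iset, Int.card_Icc]
  omega

lemma neg_mem_Iset_two_mul_add_one {M : ℕ} {k : ℤ} (hk : k ∈ Iset (2 * M + 1)) :
    -k ∈ Iset (2 * M + 1) := by
  simp only [Iset, mem_Icc] at hk ⊢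
  omega

lemma mem_supp {N : ℕ} {u : ℤ → ℂ} {k : ℤ} : k ∈ supp N u ↔ k ∈ Iset N ∧ u k ≠ 0 := by
  simp [supp]

namespace Finset

lemma subset_Icc_sup_natAbs (S : Finset ℤ) :
    S ⊆ Icc (-((S.sup Int.natAbs : ℕ) : ℤ)) (S.sup Int.natAbs : ℕ) := by
  intro k hk
  have := le_sup (f := Int.natAbs) hk
  rw [mem_Icc]
  omega

lemma card_le_two_mul_sup_natAbs {S : Finset ℤ} (h0 : 0 ∉ S) :
    #S ≤ 2 * S.sup Int.natAbs := by
  set m : ℤ := ((S.sup Int.natAbs : ℕ) : ℤ)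
  have hsub : S ⊆ (Icc (-m) m).erase 0 := fun k hk =>
    mem_erase.mpr ⟨fun h => h0 (h ▸ hk), S.subset_Icc_sup_natAbs hk⟩
  calc #S ≤ #((Icc (-m) m).erase 0) := card_le_card hsub
    _ = 2 * S.sup Int.natAbs := by
      rw [card_erase_of_mem (by simp [m]), Int.card_Icc]
      omega

lemma sup_sub_toNat_eq_two_mul_sup_natAbs {S : Finset ℤ} (hS : ∀ k ∈ S, -k ∈ S) :
    (S ×ˢ S).sup (fun p => (p.1 - p.2).toNat) = 2 * S.sup Int.natAbs := by
  apply le_antisymm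
  · refine Finset.sup_le fun p hp => ?_
    have h1 := S.subset_Icc_sup_natAbs (mem_product.mp hp).1
    have h2 := S.subset_Icc_sup_natAbs (mem_product.mp hp).2
    rw [mem_Icc] at h1 h2
    omega
  · rcases S.eq_empty_or_nonempty with rfl | hne
    · simp
    obtain ⟨k, hk, hkm⟩ := S.exists_mem_eq_sup hne Int.natAbs
    have h1 := le_sup (f := fun p : ℤ × ℤ => (p.1 - p.2).toNat)
      (mem_product.mpr ⟨hk, hS k hk⟩ : (k, -k) ∈ S ×ˢ S)
    have h2 := le_sup (f := fun p : ℤ × ℤ => (p.1 - p.2).toNat)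
      (mem_product.mpr ⟨hS k hk, hk⟩ : (-k, k) ∈ S ×ˢ S)
    simp only at h1 h2
    omega

end Finset

open Polynomial in
lemma card_le_of_forall_sum_zpow_eq_zero {K : Type*} [Field K] {S : Finset ℤ} {c : ℤ → K}
    {p q : ℤ} (hS : S ⊆ Icc p q) (hc : ∃ k ∈ S, c k ≠ 0) {Z : Finset K} (hZ0 : 0 ∉ Z)
    (hZ : ∀ z ∈ Z, ∑ k ∈ S, c k * z ^ k = 0) : #Z ≤ (q - p).toNat := by
  classical
  set Q : K[X] := ∑ k ∈ S, C (c k) * X ^ (k - p).toNat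
  have hexp : ∀ k ∈ S, ((k - p).toNat : ℤ) = k - p := fun k hk => by
    have := mem_Icc.mp (hS hk); omega
  have hQ_eval : ∀ z ≠ 0, ∑ k ∈ S, c k * z ^ k = z ^ p * Q.eval z := fun z hz => by
    simp only [Q, eval_finsetSum, eval_mul, eval_C, eval_pow, eval_X, mul_sum]
    refine sum_congr rfl fun k hk => ?_
    rw [← zpow_natCast, hexp k hk, zpow_sub₀ hz]
    field_simp
  have hQ_coeff : ∀ k ∈ S, Q.coeff (k - p).toNat = c k := fun k hk => by
    simp only [Q, finsetSum_coeff, coeff_C_mul, coeff_X_pow]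
    rw [sum_eq_single k (fun j hj hjk => by
      rw [if_neg (by have := hexp j hj; have := hexp k hk; omega), mul_zero])
      (absurd hk)]
    simp
  have hQ_ne : Q ≠ 0 := by
    obtain ⟨k, hk, hck⟩ := hc
    exact fun h => hck (by rw [← hQ_coeff k hk, h, coeff_zero])
  have hQ_deg : Q.natDegree ≤ (q - p).toNat :=
    natDegree_sum_le_of_forall_le _ _ fun k hk =>
      (natDegree_C_mul_X_pow_le _ _).trans (by have := mem_Icc.mp (hS hk); omega)
  refine (card_le_degree_of_subset_roots fun z hz => ?_).trans hQ_deg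
  have hz0 : z ≠ 0 := fun h => hZ0 (h ▸ hz)
  rw [mem_roots hQ_ne, IsRoot, ← (mul_eq_zero_iff_left (zpow_ne_zero p hz0)), ← hQ_eval z hz0]
  exact hZ z hz

noncomputable def dftRoot (N : ℕ) : ℂ := Complex.exp (-2 * π * Complex.I / N)

lemma isPrimitiveRoot_dftRoot {N : ℕ} (hN : N ≠ 0) : IsPrimitiveRoot (dftRoot N) N := by
  have h : dftRoot N = (Complex.exp (2 * π * Complex.I / N))⁻¹ := by
    rw [dftRoot, ← Complex.exp_neg]
    congr 1
    ring
  exact h ▸ (Complex.isPrimitiveRoot_exp N hN).inv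

lemma exp_dft_kernel (N : ℕ) (k l : ℤ) :
    Complex.exp (-2 * π * Complex.I * k * l / N) = (dftRoot N ^ l) ^ k := by
  rw [← zpow_mul, dftRoot, ← Complex.exp_int_mul]
  push_cast
  ring_nf

lemma dft_eq_sum_supp (N : ℕ) (u : ℤ → ℂ) (l : ℤ) :
    dft N u l = (Real.sqrt N : ℂ)⁻¹ * ∑ k ∈ supp N u, u k * (dftRoot N ^ l) ^ k := by
  rw [dft, supp, sum_filter_of_ne fun k _ h => left_ne_zero_of_mul h]
  simp_rw [exp_dft_kernel, mul_comm]

lemma injOn_dftRoot_zpow (N : ℕ) : Set.InjOn (fun l : ℤ => dftRoot N ^ l) (Iset N) := by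
  intro l hl l' hl' h
  have hN := (pos_of_mem_Iset hl).ne'
  have hζ := isPrimitiveRoot_dftRoot hN
  have hdvd : (N : ℤ) ∣ l - l' := (hζ.zpow_eq_one_iff_dvd _).mp <| by
    rw [zpow_sub₀ (hζ.ne_zero hN), div_eq_one_iff_eq (zpow_ne_zero _ (hζ.ne_zero hN))]
    exact h
  simp only [Iset, coe_Icc, Set.mem_Icc] at hl hl'
  have := Int.eq_zero_of_abs_lt_dvd hdvd (by rw [abs_lt]; omega)
  omega

open Classical in
lemma card_filter_dft_eq_zero_le {N : ℕ} {u : ℤ → ℂ} {p q : ℤ} (hsupp : supp N u ⊆ Icc p q)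
    (hne : (supp N u).Nonempty) : #{l ∈ Iset N | dft N u l = 0} ≤ (q - p).toNat := by
  obtain ⟨k, hk⟩ := hne
  have hN := pos_of_mem_Iset (mem_supp.mp hk).1
  rw [← card_image_of_injOn ((injOn_dftRoot_zpow N).mono (coe_subset.mpr (filter_subset _ _)))]
  refine card_le_of_forall_sum_zpow_eq_zero hsupp ⟨k, hk, (mem_supp.mp hk).2⟩ ?_ ?_
  · rw [mem_image]
    rintro ⟨l, -, hl⟩
    exact zpow_ne_zero l (Complex.exp_ne_zero _) hl
  · simp only [mem_image, mem_filter]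
    rintro _ ⟨l, ⟨-, hl⟩, rfl⟩
    rw [dft_eq_sum_supp] at hl
    exact (mul_eq_zero.mp hl).resolve_left (by simp [hN.ne'])

open Classical in
lemma card_filter_eq_zero_add_card_supp (N : ℕ) (v : ℤ → ℂ) :
    #{l ∈ Iset N | v l = 0} + #(supp N v) = N := by
  rw [supp, card_filter_add_card_filter_not, card_Iset]

section Odd

variable {M : ℕ} {u : ℤ → ℂ}

lemma neg_mem_supp_of_odd (hu : ∀ k ∈ Iset (2 * M + 1), u (-k) = -u k) {k : ℤ}
    (hk : k ∈ supp (2 * M + 1) u) : -k ∈ supp (2 * M + 1) u := by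
  rw [mem_supp] at hk ⊢
  rw [hu k hk.1, neg_ne_zero]
  exact ⟨neg_mem_Iset_two_mul_add_one hk.1, hk.2⟩

lemma zero_notMem_supp_of_odd (hu : ∀ k ∈ Iset (2 * M + 1), u (-k) = -u k) :
    0 ∉ supp (2 * M + 1) u := by
  rw [mem_supp, not_and_not_right]
  intro h0
  exact self_eq_neg.mp (by simpa using hu 0 h0)

lemma len_eq_of_odd (hu : ∀ k ∈ Iset (2 * M + 1), u (-k) = -u k) :
    len (2 * M + 1) u = 2 * (supp (2 * M + 1) u).sup Int.natAbs + 1 := by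
  rw [len, sup_sub_toNat_eq_two_mul_sup_natAbs fun k => neg_mem_supp_of_odd hu]

lemma card_supp_lt_len_of_odd (hu : ∀ k ∈ Iset (2 * M + 1), u (-k) = -u k) :
    #(supp (2 * M + 1) u) < len (2 * M + 1) u := by
  rw [len_eq_of_odd hu]
  exact Nat.lt_succ_of_le (card_le_two_mul_sup_natAbs (zero_notMem_supp_of_odd hu))

lemma dft_neg_of_odd (hu : ∀ k ∈ Iset (2 * M + 1), u (-k) = -u k) (l : ℤ) :
    dft (2 * M + 1) u (-l) = -dft (2 * M + 1) u l := by
  rw [dft, dft, ← mul_neg, ← sum_neg_distrib]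
  congr 1
  refine sum_nbij' Neg.neg Neg.neg (fun k => neg_mem_Iset_two_mul_add_one)
    (fun k => neg_mem_Iset_two_mul_add_one) (fun k _ => neg_neg k) (fun k _ => neg_neg k)
    (fun k hk => ?_)
  rw [hu k hk]
  push_cast
  ring_nf

end Odd

theorem stmt7_general (M : ℕ) (a : ℤ → ℝ)
    (ha : ∃ k ∈ Iset (2 * M + 1), a k ≠ 0) (hodd : IsOddVec (2 * M + 1) a) :
    (2 * M + 1) + 3 ≤ len (2 * M + 1) (fun k => (a k : ℂ)) +
      len (2 * M + 1) (dft (2 * M + 1) (fun k => (a k : ℂ))) := by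
  set u : ℤ → ℂ := fun k => (a k : ℂ)
  have hu : ∀ k ∈ Iset (2 * M + 1), u (-k) = -u k := fun k hk => by simp [u, hodd k hk]
  have hb : ∀ l ∈ Iset (2 * M + 1), dft _ u (-l) = -dft _ u l := fun l _ => dft_neg_of_odd hu l
  obtain ⟨k, hk, hak⟩ := ha
  have hne : (supp (2 * M + 1) u).Nonempty := ⟨k, mem_supp.mpr ⟨hk, by simpa [u]⟩⟩
  have hzeros := card_filter_dft_eq_zero_le (supp _ u).subset_Icc_sup_natAbs hne
  have hsplit := card_filter_eq_zero_add_card_supp (2 * M + 1) (dft (2 * M + 1) u)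
  have hlen_u := len_eq_of_odd hu
  have hlen_b := len_eq_of_odd hb
  have hcard_b := card_supp_lt_len_of_odd hb
  omega

theorem stmt7 (M : ℕ) (hM : 1 ≤ M) (a : ℤ → ℝ)
    (ha : ∃ k ∈ Iset (2 * M + 1), a k ≠ 0) (hodd : IsOddVec (2 * M + 1) a) :
    (2 * M + 1) + 3 ≤ len (2 * M + 1) (fun k => (a k : ℂ)) +
      len (2 * M + 1) (dft (2 * M + 1) (fun k => (a k : ℂ))) :=
  stmt7_general M a ha hodd
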